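/- Let G be a finite group and ω a normalized 3-cocycle on G with values in ℂˣ. Then the set B^ω(G) := {g ∈ G : γ_g is a 2-coboundary on G} is a subgroup of G. -/

import Mathlib

/-!
The Dijkgraaf–Pasquier–Roche identity
`γ_{xy}(a,b) = γ_x(a,b) · γ_y(a^x,b^x) · θ_a(x,y) θ_b(x,y) θ_{ab}(x,y)⁻¹`
writes `γ_{xy}` as `γ_x`, times `γ_y` pulled back along conjugation by `x`, times the coboundary
of `a ↦ θ_a(x,y)`. Since 2-coboundaries are closed under products, inverses and pullback along
homomorphisms, and `γ_1 = 1`, the set `B^ω(G)` contains `1`, is closed under products, and,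
taking `y = x⁻¹`, under inverses.
-/

/-- Right conjugation `g^x = x⁻¹ * g * x`. -/
def groupConj {G : Type*} [Group G] (g x : G) : G := x⁻¹ * g * x

/-- `ω : G × G × G → ℂˣ` is a normalized multiplicative 3-cocycle. -/
def IsNormalized3Cocycle {G : Type*} [Group G] (ω : G → G → G → ℂˣ) : Prop :=
  (∀ a b c d : G, ω b c d * ω a (b * c) d * ω a b c = ω (a * b) c d * ω a b (c * d)) ∧
  (∀ a b c : G, a = 1 ∨ b = 1 ∨ c = 1 → ω a b c = 1)

/-- `θ_g(x,y) = ω(g,x,y)·ω(x,y,g^{xy})·ω(x,g^x,y)⁻¹`. -/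
def thetaDPR {G : Type*} [Group G] (ω : G → G → G → ℂˣ) (g x y : G) : ℂˣ :=
  ω g x y * ω x y (groupConj g (x * y)) * (ω x (groupConj g x) y)⁻¹

/-- `γ_x(a,b) = ω(a,b,x)·ω(x,a^x,b^x)·ω(a,x,b^x)⁻¹`. -/
def gammaDPR {G : Type*} [Group G] (ω : G → G → G → ℂˣ) (x a b : G) : ℂˣ :=
  ω a b x * ω x (groupConj a x) (groupConj b x) * (ω a x (groupConj b x))⁻¹

def IsTwoCoboundary {G M : Type*} [Mul G] [CommGroup M] (c : G → G → M) : Prop :=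
  ∃ τ : G → M, ∀ x y, c x y = τ x * τ y * (τ (x * y))⁻¹

namespace IsTwoCoboundary

variable {G H M : Type*} [Mul G] [Mul H] [CommGroup M] {c d : G → G → M}

theorem one : IsTwoCoboundary (fun _ _ : G => (1 : M)) :=
  ⟨1, fun _ _ => by simp⟩

theorem of_cochain (τ : G → M) : IsTwoCoboundary (fun x y => τ x * τ y * (τ (x * y))⁻¹) :=
  ⟨τ, fun _ _ => rfl⟩

theorem mul (hc : IsTwoCoboundary c) (hd : IsTwoCoboundary d) :
    IsTwoCoboundary (fun x y => c x y * d x y) := by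
  obtain ⟨σ, hσ⟩ := hc
  obtain ⟨τ, hτ⟩ := hd
  exact ⟨σ * τ, fun x y => by simp only [hσ, hτ, Pi.mul_apply, mul_inv]; ac_rfl⟩

theorem inv (hc : IsTwoCoboundary c) : IsTwoCoboundary (fun x y => (c x y)⁻¹) := by
  obtain ⟨σ, hσ⟩ := hc
  exact ⟨σ⁻¹, fun x y => by simp only [hσ, Pi.inv_apply, mul_inv, inv_inv]⟩

theorem comp {F : Type*} [FunLike F H G] [MulHomClass F H G] {c : G → G → M}
    (hc : IsTwoCoboundary c) (f : F) : IsTwoCoboundary (fun x y => c (f x) (f y)) := by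
  obtain ⟨σ, hσ⟩ := hc
  exact ⟨σ ∘ f, fun x y => by simp only [hσ, Function.comp_apply, map_mul]⟩

end IsTwoCoboundary

section Conj

variable {G : Type*} [Group G]

theorem groupConj_one_right (a : G) : groupConj a 1 = a := by
  simp [groupConj]

theorem groupConj_mul_left (a b x : G) :
    groupConj (a * b) x = groupConj a x * groupConj b x := by
  simp [groupConj, mul_assoc]

theorem groupConj_mul_right (a x y : G) :
    groupConj a (x * y) = groupConj (groupConj a x) y := by
  simp [groupConj, mul_assoc]

theorem mul_groupConj (a x : G) : x * groupConj a x = a * x := by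
  simp [groupConj, mul_assoc]

def groupConjHom (x : G) : G →* G where
  toFun g := groupConj g x
  map_one' := by simp [groupConj]
  map_mul' a b := groupConj_mul_left a b x

end Conj

section Cocycle

variable {G : Type*} [Group G] {ω : G → G → G → ℂˣ}

theorem gammaDPR_one (hω : IsNormalized3Cocycle ω) (a b : G) : gammaDPR ω 1 a b = 1 := by
  simp [gammaDPR, hω.2]

theorem gammaDPR_mul (hω : IsNormalized3Cocycle ω) (x y a b : G) :
    gammaDPR ω (x * y) a b =
      gammaDPR ω x a b * gammaDPR ω y (groupConj a x) (groupConj b x) *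
        (thetaDPR ω a x y * thetaDPR ω b x y * (thetaDPR ω (a * b) x y)⁻¹) := by
  obtain ⟨hc, -⟩ := hω
  -- In `Additive ℂˣ` the identity is the signed sum of six instances of the cocycle condition.
  have h1 := congrArg Additive.ofMul
    (hc x y (groupConj (groupConj a x) y) (groupConj (groupConj b x) y))
  have h2 := congrArg Additive.ofMul (hc a b x y)
  have h3 := congrArg Additive.ofMul (hc a x y (groupConj (groupConj b x) y))
  have h4 := congrArg Additive.ofMul (hc a x (groupConj b x) y)
  have h5 := congrArg Additive.ofMul (hc x (groupConj a x) (groupConj b x) y)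
  have h6 := congrArg Additive.ofMul (hc x (groupConj a x) y (groupConj (groupConj b x) y))
  apply Additive.ofMul.injective
  simp only [gammaDPR, thetaDPR, groupConj_mul_left, groupConj_mul_right, mul_groupConj,
    ofMul_mul, ofMul_inv] at h1 h2 h3 h4 h5 h6 ⊢
  linear_combination (norm := abel) h4 + h6 - (h1 + h2 + h3 + h5)

theorem gammaDPR_inv (hω : IsNormalized3Cocycle ω) (g a b : G) :
    gammaDPR ω g⁻¹ a b =
      (gammaDPR ω g (groupConj a g⁻¹) (groupConj b g⁻¹) *
        (thetaDPR ω (groupConj a g⁻¹) g g⁻¹ * thetaDPR ω (groupConj b g⁻¹) g g⁻¹ *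
          (thetaDPR ω (groupConj a g⁻¹ * groupConj b g⁻¹) g g⁻¹)⁻¹))⁻¹ := by
  have h := gammaDPR_mul hω g g⁻¹ (groupConj a g⁻¹) (groupConj b g⁻¹)
  simp only [mul_inv_cancel, gammaDPR_one hω, ← groupConj_mul_right, inv_mul_cancel,
    groupConj_one_right] at h
  refine eq_inv_of_mul_eq_one_left (Eq.trans ?_ h.symm)
  ac_rfl

def bOmega (hω : IsNormalized3Cocycle ω) : Subgroup G where
  carrier := {g | IsTwoCoboundary (gammaDPR ω g)}
  one_mem' := by
    show IsTwoCoboundary _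
    rw [funext₂ (gammaDPR_one hω)]
    exact .one
  mul_mem' {g h} hg hh := by
    show IsTwoCoboundary _
    rw [funext₂ (gammaDPR_mul hω g h)]
    exact (hg.mul (hh.comp (groupConjHom g))).mul (.of_cochain fun k => thetaDPR ω k g h)
  inv_mem' {g} hg := by
    show IsTwoCoboundary _
    rw [funext₂ (gammaDPR_inv hω g)]
    exact ((hg.mul (.of_cochain fun k => thetaDPR ω k g g⁻¹)).inv).comp (groupConjHom g⁻¹)

end Cocycle

theorem Bomega_is_subgroup_general {G : Type*} [Group G]
    (ω : G → G → G → ℂˣ) (hω : IsNormalized3Cocycle ω) :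
    ∃ H : Subgroup G, ∀ g : G,
      g ∈ H ↔ ∃ τ : G → ℂˣ, ∀ x y : G,
        gammaDPR ω g x y = τ x * τ y * (τ (x * y))⁻¹ :=
  ⟨bOmega hω, fun _ => Iff.rfl⟩

/-- `B^ω(G) = {g ∈ G : γ_g is a 2-coboundary on G}` is a subgroup of `G`. -/
theorem Bomega_is_subgroup {G : Type*} [Group G] [Finite G]
    (ω : G → G → G → ℂˣ) (hω : IsNormalized3Cocycle ω) :
    ∃ H : Subgroup G, ∀ g : G,
      g ∈ H ↔ ∃ τ : G → ℂˣ, ∀ x y : G,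
        gammaDPR ω g x y = τ x * τ y * (τ (x * y))⁻¹ :=
  Bomega_is_subgroup_general ω hω
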